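/- Let α be an infinite limit ordinal of countable cofinality, and let {α_n}_{n<ω} be a strictly increasing cofinal sequence in α. For each n, let f_n be the transposition of [0, α] (with the order topology) swapping α_n + 1 and α_n + 2 and fixing all other points. Then each f_n is a homeomorphism of [0, α], f_n ≠ id for all n, and the sequence (f_n) converges uniformly to the identity of [0, α]. -/

import Mathlib

/-!
The points `αₙ + 1` and `αₙ + 2` are successors, hence isolated, so the transposition swapping
them is a homeomorphism. Both points lie between `αₙ` and `αₙ₊₂`, so they converge to the same
limit `sup αₙ`. A transposition of two points close to a common point `z` keeps every pair
`(f x, x)` in any given neighbourhood of the diagonal: it fixes all other points, and the two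
pairs it moves are near `(z, z)`.
-/

open Filter Topology

section Transposition

variable {X : Type*} [TopologicalSpace X]

lemma isOpen_singleton_of_isOpen_singleton_val {s : Set X} {x : s}
    (hx : IsOpen ({(x : X)} : Set X)) : IsOpen {x} := by
  have hpre : Subtype.val ⁻¹' {(x : X)} = ({x} : Set s) := Set.ext fun _ => Subtype.ext_iff.symm
  exact hpre ▸ hx.preimage continuous_subtype_val

variable [DecidableEq X]

lemma continuous_swap_of_isOpen_singleton [T1Space X] {p q : X} (hp : IsOpen {p})
    (hq : IsOpen {q}) : Continuous (Equiv.swap p q) := by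
  refine continuous_iff_continuousAt.mpr fun x => ?_
  by_cases hxpq : x = p ∨ x = q
  · have hx : 𝓝 x = pure x := by
      rcases hxpq with rfl | rfl
      exacts [(isOpen_singleton_iff_nhds_eq_pure x).mp hp,
        (isOpen_singleton_iff_nhds_eq_pure x).mp hq]
    simpa only [ContinuousAt, hx] using tendsto_pure_nhds (Equiv.swap p q) x
  · have hopen : IsOpen ({p, q} : Set X)ᶜ := (Set.toFinite _).isClosed.isOpen_compl
    refine continuousAt_id.congr ?_
    filter_upwards [hopen.mem_nhds (by simpa using hxpq)] with y hy
    simp only [Set.mem_compl_iff, Set.mem_insert_iff, Set.mem_singleton_iff, not_or] at hy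
    exact (Equiv.swap_apply_of_ne_of_ne hy.1 hy.2).symm

def Homeomorph.swapOfIsOpen [T1Space X] {p q : X} (hp : IsOpen {p}) (hq : IsOpen {q}) :
    X ≃ₜ X where
  toEquiv := Equiv.swap p q
  continuous_toFun := continuous_swap_of_isOpen_singleton hp hq
  continuous_invFun := continuous_swap_of_isOpen_singleton hp hq

@[simp]
lemma Homeomorph.swapOfIsOpen_apply [T1Space X] {p q : X} (hp : IsOpen {p}) (hq : IsOpen {q})
    (x : X) : Homeomorph.swapOfIsOpen hp hq x = Equiv.swap p q x :=
  rfl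

lemma eventually_forall_swap_mem_of_tendsto {ι : Type*} {l : Filter ι} {p q : ι → X} {z : X}
    (hp : Tendsto p l (𝓝 z)) (hq : Tendsto q l (𝓝 z)) {U : Set (X × X)}
    (hU : U ∈ 𝓝ˢ (Set.diagonal X)) : ∀ᶠ i in l, ∀ x, (Equiv.swap (p i) (q i) x, x) ∈ U := by
  have hUz : U ∈ 𝓝 (z, z) := mem_nhdsSet_iff_forall.mp hU _ rfl
  filter_upwards [(hq.prodMk_nhds hp).eventually_mem hUz,
    (hp.prodMk_nhds hq).eventually_mem hUz] with i hqp hpq x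
  rcases eq_or_ne x (p i) with rfl | hxp
  · rwa [Equiv.swap_apply_left]
  rcases eq_or_ne x (q i) with rfl | hxq
  · rwa [Equiv.swap_apply_right]
  rw [Equiv.swap_apply_of_ne_of_ne hxp hxq]
  exact subset_of_mem_nhdsSet hU rfl

end Transposition

namespace Ordinal

lemma isOpen_singleton_add_one (o : Ordinal) : IsOpen ({o + 1} : Set Ordinal) :=
  SuccOrder.isOpen_singleton_iff.mpr (Order.not_isSuccLimit_succ o)

lemma add_natCast_le_of_strictMono {a : ℕ → Ordinal} (ha : StrictMono a) (n k : ℕ) :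
    a n + k ≤ a (n + k) := by
  induction k with
  | zero => simp
  | succ k ih =>
    calc a n + ↑(k + 1) = a n + k + 1 := by rw [Nat.cast_succ, add_assoc]
      _ ≤ a (n + k) + 1 := add_le_add_left ih 1
      _ ≤ a (n + (k + 1)) := Order.add_one_le_of_lt (ha (by omega))

lemma tendsto_add_natCast_iSup_of_strictMono {a : ℕ → Ordinal} (ha : StrictMono a) (k : ℕ) :
    Tendsto (fun n => a n + k) atTop (𝓝 (⨆ n, a n)) := by
  have hlim : Tendsto a atTop (𝓝 (⨆ n, a n)) :=
    tendsto_atTop_ciSup ha.monotone bddAbove_of_small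
  exact tendsto_of_tendsto_of_tendsto_of_le_of_le hlim
    (hlim.comp (tendsto_add_atTop_nat k)) (fun _ => le_self_add)
    (add_natCast_le_of_strictMono ha · k)

end Ordinal

open Ordinal

theorem stmt15_general (α : Ordinal) (a : ℕ → Ordinal)
    (ha : StrictMono a) (ha' : ∀ n, a n < α) :
    ∃ f : ℕ → (Set.Iic α ≃ₜ Set.Iic α),
      (∀ n, ∀ x : Set.Iic α,
        (f n x : Ordinal) = if (x : Ordinal) = a n + 1 then a n + 2
          else if (x : Ordinal) = a n + 2 then a n + 1 else (x : Ordinal)) ∧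
      (∀ n, f n ≠ Homeomorph.refl (Set.Iic α)) ∧
      (∀ U ∈ nhdsSet (Set.diagonal (Set.Iic α)),
        ∃ N : ℕ, ∀ n ≥ N, ∀ x : Set.Iic α, (f n x, x) ∈ U) := by
  have hmem : ∀ k : ℕ, ∀ n, a n + k ≤ α := fun k n =>
    (add_natCast_le_of_strictMono ha n k).trans (ha' _).le
  let pt (k : ℕ) (n : ℕ) : Set.Iic α := ⟨a n + k, hmem k n⟩
  have hval (k n : ℕ) : (pt k n : Ordinal) = a n + k := rfl
  have hP (n : ℕ) : IsOpen {pt 1 n} :=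
    isOpen_singleton_of_isOpen_singleton_val (by simpa [hval] using isOpen_singleton_add_one (a n))
  have hQ (n : ℕ) : IsOpen {pt 2 n} := by
    refine isOpen_singleton_of_isOpen_singleton_val ?_
    simpa [hval, add_assoc, one_add_one_eq_two] using isOpen_singleton_add_one (a n + 1)
  have hne (n : ℕ) : pt 1 n ≠ pt 2 n := by
    simp [pt, Subtype.ext_iff]
  refine ⟨fun n => Homeomorph.swapOfIsOpen (hP n) (hQ n),
    fun n x => ?_, fun n h => hne n ?_, fun U hU => ?_⟩
  · simp [Equiv.swap_apply_def, apply_ite Subtype.val, Subtype.ext_iff, hval]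
  · simpa using (DFunLike.congr_fun h (pt 1 n)).symm
  · have hsup : ⨆ n, a n ≤ α := ciSup_le fun n => (ha' n).le
    have hlim (k : ℕ) : Tendsto (pt k) atTop (𝓝 ⟨_, hsup⟩) :=
      IsEmbedding.subtypeVal.tendsto_nhds_iff.mpr (tendsto_add_natCast_iSup_of_strictMono ha k)
    exact eventually_atTop.mp (eventually_forall_swap_mem_of_tendsto (hlim 1) (hlim 2) hU)

theorem stmt15 (α : Ordinal) (hα : Order.IsSuccLimit α) (a : ℕ → Ordinal)
    (ha : StrictMono a) (ha' : ∀ n, a n < α) (hcof : ∀ ξ < α, ∃ n, ξ ≤ a n) :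
    ∃ f : ℕ → (Set.Iic α ≃ₜ Set.Iic α),
      (∀ n, ∀ x : Set.Iic α,
        (f n x : Ordinal) = if (x : Ordinal) = a n + 1 then a n + 2
          else if (x : Ordinal) = a n + 2 then a n + 1 else (x : Ordinal)) ∧
      (∀ n, f n ≠ Homeomorph.refl (Set.Iic α)) ∧
      (∀ U ∈ nhdsSet (Set.diagonal (Set.Iic α)),
        ∃ N : ℕ, ∀ n ≥ N, ∀ x : Set.Iic α, (f n x, x) ∈ U) :=
  stmt15_general α a ha ha'
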